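/- arXiv:1812.03820 — 2 statements merged into one kernel-verified Lean document; each statement's English description precedes it below -/
import Mathlib

section
/- For every positive integer n with n ≡ 0 (mod 8), t(1,1,6;n) = 2·N(1,1,3;n+1), and for every positive integer n with n ≡ 4 (mod 8), t(1,1,6;n) = N(1,1,3;n+1). -/
def tri (x : ℤ) : ℤ := x * (x + 1) / 2

noncomputable def N (a b c n : ℕ) : ℕ :=
  Nat.card {p : ℤ × ℤ × ℤ // (n : ℤ) = a * p.1 ^ 2 + b * p.2.1 ^ 2 + c * p.2.2 ^ 2}

noncomputable def t (a b c n : ℕ) : ℕ :=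
  Nat.card {p : ℤ × ℤ × ℤ // (n : ℤ) = a * tri p.1 + b * tri p.2.1 + c * tri p.2.2}

noncomputable def T (a b c n : ℕ) : ℕ :=
  Nat.card {p : ℕ × ℕ × ℕ // (n : ℤ) = a * tri p.1 + b * tri p.2.1 + c * tri p.2.2}

/-!
Completing squares turns `n = tri x + tri y + 6 tri z` into
`(x + y + 1)² + (x - y)² + 3 (2z + 1)² = 4 (n + 1)`. Via the identity
`(x + 3z)² + (2y)² + 3 (x - z)² = 4 (x² + y² + 3z²)` and the symmetries `a ↔ b`, `a ↦ -a` of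
`a² + b² + 3w²`, this gives `t(1,1,6;n) = 4 · #{x² + y² + 3z² = n + 1, x + z odd}` for every `n`.

For `m = n + 1 ≡ 1 (mod 4)` the solutions of `x² + y² + 3z² = m` with `x + z` odd are those with
`x` odd and `z` even, and swapping `x, y` shows they are half of all solutions with `z` even.
If `m ≡ 1 (mod 8)` every solution has `z` even. If `m ≡ 5 (mod 8)` the solutions with `z` odd have
`x, y, z` all odd, and the reflection `(y, z) ↦ ((y + 3z)/2, (y - z)/2)` of `y² + 3z²`, combined
with `z ↦ -z`, matches them two-to-one with those having `y, z` even.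
-/

open Set Function

lemma ncard_sep_add_ncard_sep_not {α : Type*} (s : Set α) (P : α → Prop)
    (hs : s.Finite := by toFinite_tac) :
    {a ∈ s | P a}.ncard + {a ∈ s | ¬P a}.ncard = s.ncard :=
  ncard_inter_add_ncard_sdiff_eq_ncard s {a | P a} hs

lemma ncard_eq_two_mul_ncard_sep {α : Type*} {s : Set α} {f : α → α} (hf : Involutive f)
    (hfs : MapsTo f s s) {P : α → Prop} (hP : ∀ a ∈ s, ¬P a ↔ P (f a))
    (hs : s.Finite := by toFinite_tac) :
    s.ncard = 2 * {a ∈ s | P a}.ncard := by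
  have hswap : {a ∈ s | ¬P a}.ncard = {a ∈ s | P a}.ncard := by
    refine (InvOn.bijOn (f' := f) ⟨fun a _ ↦ hf a, fun a _ ↦ hf a⟩ ?_ ?_).ncard_eq
    · exact fun a ⟨ha, hPa⟩ ↦ ⟨hfs ha, (hP a ha).1 hPa⟩
    · refine fun a ⟨ha, hPa⟩ ↦ ⟨hfs ha, ?_⟩
      rwa [hP _ (hfs ha), hf]
  rw [← ncard_sep_add_ncard_sep_not s P hs, hswap, two_mul]

lemma sq_emod_eight (x : ℤ) :
    (x % 2 = 1 ∧ x ^ 2 % 8 = 1) ∨ (x % 4 = 0 ∧ x ^ 2 % 8 = 0) ∨ (x % 4 = 2 ∧ x ^ 2 % 8 = 4) := by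
  obtain ⟨q, r, hr, hr4, rfl⟩ : ∃ q r, 0 ≤ r ∧ r < 4 ∧ x = 4 * q + r := ⟨x / 4, x % 4, by omega⟩
  rw [show (4 * q + r) ^ 2 = 8 * (2 * q ^ 2 + q * r) + r ^ 2 by ring]
  interval_cases r <;> omega

lemma sq_add_three_mul_sq_eq_of_reflection {y z Y Z : ℤ} (hY : 2 * Y = y + 3 * z)
    (hZ : 2 * Z = y - z) : Y ^ 2 + 3 * Z ^ 2 = y ^ 2 + 3 * z ^ 2 := by
  have : 4 * (Y ^ 2 + 3 * Z ^ 2) = 4 * (y ^ 2 + 3 * z ^ 2) := by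
    linear_combination (2 * Y + y + 3 * z) * hY + 3 * (2 * Z + y - z) * hZ
  omega

lemma two_mul_tri (x : ℤ) : 2 * tri x = x * (x + 1) :=
  Int.mul_ediv_cancel' (Int.even_mul_succ_self x).two_dvd

lemma four_mul_tri_add_tri_add_six_mul_tri (x y z : ℤ) :
    4 * (tri x + tri y + 6 * tri z + 1) =
      (x + y + 1) ^ 2 + (x - y) ^ 2 + 3 * (2 * z + 1) ^ 2 := by
  linear_combination 2 * two_mul_tri x + 2 * two_mul_tri y + 12 * two_mul_tri z

def reps113 (m : ℤ) : Set (ℤ × ℤ × ℤ) := {p | p.1 ^ 2 + p.2.1 ^ 2 + 3 * p.2.2 ^ 2 = m}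

@[simp]
lemma mem_reps113 {m : ℤ} {p : ℤ × ℤ × ℤ} :
    p ∈ reps113 m ↔ p.1 ^ 2 + p.2.1 ^ 2 + 3 * p.2.2 ^ 2 = m :=
  Iff.rfl

instance (m : ℤ) : Finite (reps113 m) := by
  refine ((finite_Icc (-m) m).prod ((finite_Icc (-m) m).prod (finite_Icc (-m) m))).subset ?_
  rintro ⟨x, y, z⟩ h
  have := Int.le_self_sq x; have := Int.le_self_sq y; have := Int.le_self_sq z
  have := Int.le_self_sq (-x); have := Int.le_self_sq (-y); have := Int.le_self_sq (-z)
  simp only [mem_reps113, neg_sq, mem_prod, mem_Icc] at *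
  refine ⟨⟨?_, ?_⟩, ⟨?_, ?_⟩, ⟨?_, ?_⟩⟩ <;> linarith [sq_nonneg x, sq_nonneg y, sq_nonneg z]

lemma parity_of_mem_reps113 {m : ℤ} {p : ℤ × ℤ × ℤ} (hp : p ∈ reps113 m) (hm : m % 4 = 1) :
    (p.2.2 % 2 = 0 ∧ (p.1 + p.2.1) % 2 = 1) ∨
      (p.1 % 2 = 1 ∧ p.2.1 % 2 = 1 ∧ p.2.2 % 2 = 1 ∧ m % 8 = 5) := by
  rw [mem_reps113] at hp
  rcases sq_emod_eight p.1 with h₁ | h₁ | h₁ <;> rcases sq_emod_eight p.2.1 with h₂ | h₂ | h₂ <;>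
    rcases sq_emod_eight p.2.2 with h₃ | h₃ | h₃ <;> omega

lemma sub_emod_four_of_mem_reps113 {m : ℤ} {p : ℤ × ℤ × ℤ} (hp : p ∈ reps113 m)
    (hm : m % 8 = 5) (hy : p.2.1 % 2 = 0) (hz : p.2.2 % 2 = 0) : (p.2.1 - p.2.2) % 4 = 2 := by
  rw [mem_reps113] at hp
  rcases sq_emod_eight p.1 with h₁ | h₁ | h₁ <;> rcases sq_emod_eight p.2.1 with h₂ | h₂ | h₂ <;>
    rcases sq_emod_eight p.2.2 with h₃ | h₃ | h₃ <;> omega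

lemma N_one_one_three_eq_ncard (n : ℕ) : N 1 1 3 n = (reps113 n).ncard := by
  change {p : ℤ × ℤ × ℤ |
    (n : ℤ) = (1 : ℕ) * p.1 ^ 2 + (1 : ℕ) * p.2.1 ^ 2 + (3 : ℕ) * p.2.2 ^ 2}.ncard = _
  push_cast
  simp only [one_mul, eq_comm (a := (n : ℤ))]
  rfl

lemma t_one_one_six_eq_ncard (n : ℕ) :
    t 1 1 6 n = {p ∈ reps113 (4 * (n + 1)) | (p.1 + p.2.1) % 2 = 1 ∧ p.2.2 % 2 = 1}.ncard := by
  change {p : ℤ × ℤ × ℤ |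
    (n : ℤ) = (1 : ℕ) * tri p.1 + (1 : ℕ) * tri p.2.1 + (6 : ℕ) * tri p.2.2}.ncard = _
  push_cast
  simp only [one_mul]
  refine (InvOn.bijOn (f := fun p : ℤ × ℤ × ℤ ↦ (p.1 + p.2.1 + 1, p.1 - p.2.1, 2 * p.2.2 + 1))
    (f' := fun p ↦ ((p.1 + p.2.1 - 1) / 2, (p.1 - p.2.1 - 1) / 2, (p.2.2 - 1) / 2))
    ⟨?_, ?_⟩ ?_ ?_).ncard_eq
  · rintro ⟨x, y, z⟩ -
    simp only [Prod.mk.injEq]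
    omega
  · rintro ⟨a, b, w⟩ ⟨-, hab, hw⟩
    dsimp only at hab hw
    simp only [Prod.mk.injEq]
    omega
  · rintro ⟨x, y, z⟩ h
    simp only [mem_ofPred_eq, mem_reps113] at h ⊢
    refine ⟨?_, by omega, by omega⟩
    rw [← four_mul_tri_add_tri_add_six_mul_tri, ← h]
  · rintro ⟨a, b, w⟩ ⟨h, hab, hw⟩
    dsimp only at hab hw
    simp only [mem_ofPred_eq, mem_reps113] at h ⊢
    have key := four_mul_tri_add_tri_add_six_mul_tri ((a + b - 1) / 2) ((a - b - 1) / 2)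
      ((w - 1) / 2)
    have ha : (a + b - 1) / 2 + (a - b - 1) / 2 + 1 = a := by omega
    have hb : (a + b - 1) / 2 - (a - b - 1) / 2 = b := by omega
    have hw' : 2 * ((w - 1) / 2) + 1 = w := by omega
    rw [ha, hb, hw', h] at key
    omega

lemma mem_reps113_four_mul_iff {m x y z : ℤ} :
    (x + 3 * z, 2 * y, x - z) ∈ reps113 (4 * m) ↔ (x, y, z) ∈ reps113 m := by
  simp only [mem_reps113]
  rw [show (x + 3 * z) ^ 2 + (2 * y) ^ 2 + 3 * (x - z) ^ 2 = 4 * (x ^ 2 + y ^ 2 + 3 * z ^ 2) by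
    ring]
  omega

lemma ncard_reps113_four_mul (m : ℤ) :
    {p ∈ reps113 (4 * m) | (p.1 + p.2.1) % 2 = 1 ∧ p.2.2 % 2 = 1}.ncard =
      4 * {p ∈ reps113 m | (p.1 + p.2.2) % 2 = 1}.ncard := by
  rw [ncard_eq_two_mul_ncard_sep (f := fun p ↦ (p.2.1, p.1, p.2.2)) (fun _ ↦ rfl)
      (by rintro ⟨a, b, w⟩ ⟨h, hab, hw⟩
          exact ⟨by simp only [mem_reps113] at h ⊢; linarith, by dsimp only at *; omega⟩)
      (P := fun p ↦ p.1 % 2 = 1) (by rintro ⟨a, b, w⟩ ⟨-, hab, -⟩; dsimp only at *; omega),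
    ncard_eq_two_mul_ncard_sep (f := fun p ↦ (-p.1, p.2.1, p.2.2)) (fun p ↦ by simp)
      (by rintro ⟨a, b, w⟩ ⟨⟨h, hab, hw⟩, ha⟩
          exact ⟨⟨by simpa using h, by dsimp only at *; omega⟩, by dsimp only at *; omega⟩)
      (P := fun p ↦ (p.1 - p.2.2) % 4 = 0)
      (by rintro ⟨a, b, w⟩ ⟨⟨-, -, hw⟩, ha⟩; dsimp only at *; omega),
    (InvOn.bijOn (f := fun p ↦ ((p.1 + 3 * p.2.2) / 4, p.2.1 / 2, (p.1 - p.2.2) / 4))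
      (f' := fun p ↦ (p.1 + 3 * p.2.2, 2 * p.2.1, p.1 - p.2.2)) ⟨?_, ?_⟩ ?_ ?_).ncard_eq]
  · ring
  · rintro ⟨a, b, w⟩ ⟨⟨⟨-, hab, hw⟩, ha⟩, haw⟩
    dsimp only at *
    simp only [Prod.mk.injEq]
    omega
  · rintro ⟨x, y, z⟩ -
    simp only [Prod.mk.injEq]
    omega
  · rintro ⟨a, b, w⟩ ⟨⟨⟨h, hab, hw⟩, ha⟩, haw⟩
    dsimp only [mem_ofPred_eq] at hab hw ha haw ⊢
    have hp : (a, b, w) =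
        ((a + 3 * w) / 4 + 3 * ((a - w) / 4), 2 * (b / 2), (a + 3 * w) / 4 - (a - w) / 4) := by
      simp only [Prod.mk.injEq]
      omega
    rw [hp, mem_reps113_four_mul_iff] at h
    exact ⟨h, by omega⟩
  · rintro ⟨x, y, z⟩ ⟨h, hxz⟩
    dsimp only [mem_ofPred_eq] at hxz ⊢
    exact ⟨⟨⟨mem_reps113_four_mul_iff.2 h, by omega, by omega⟩, by omega⟩, by omega⟩

lemma reps113_sep_add_odd_eq {m : ℤ} (hm : m % 4 = 1) :
    {p ∈ reps113 m | (p.1 + p.2.2) % 2 = 1} =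
      {p ∈ {p ∈ reps113 m | p.2.2 % 2 = 0} | p.1 % 2 = 1} := by
  ext p
  refine ⟨fun ⟨h, hxz⟩ ↦ ?_, fun ⟨⟨h, hz⟩, hx⟩ ↦ ⟨h, by omega⟩⟩
  have := parity_of_mem_reps113 h hm
  exact ⟨⟨h, by omega⟩, by omega⟩

lemma reps113_sep_even_eq_self {m : ℤ} (hm : m % 8 = 1) :
    {p ∈ reps113 m | p.2.2 % 2 = 0} = reps113 m :=
  sep_eq_self_iff_mem_true.2 fun _ h ↦ by have := parity_of_mem_reps113 h (by omega); omega

lemma ncard_reps113_sep_even {m : ℤ} (hm : m % 4 = 1) :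
    {p ∈ reps113 m | p.2.2 % 2 = 0}.ncard =
      2 * {p ∈ {p ∈ reps113 m | p.2.2 % 2 = 0} | p.1 % 2 = 1}.ncard :=
  ncard_eq_two_mul_ncard_sep (f := fun p ↦ (p.2.1, p.1, p.2.2)) (fun _ ↦ rfl)
    (by rintro ⟨x, y, z⟩ ⟨h, hz⟩; exact ⟨by simp only [mem_reps113] at h ⊢; linarith, hz⟩)
    (fun p ⟨h, hz⟩ ↦ by have := parity_of_mem_reps113 h hm; dsimp only; omega)

lemma ncard_reps113_sep_odd {m : ℤ} (hm : m % 8 = 5) :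
    {p ∈ reps113 m | p.2.2 % 2 = 1}.ncard =
      2 * {p ∈ {p ∈ reps113 m | p.2.2 % 2 = 0} | p.1 % 2 = 1}.ncard := by
  have hm4 : m % 4 = 1 := by omega
  rw [ncard_eq_two_mul_ncard_sep (f := fun p ↦ (p.1, p.2.1, -p.2.2)) (fun p ↦ by simp)
      (by rintro ⟨x, y, z⟩ ⟨h, hz⟩; exact ⟨by simpa using h, by dsimp only at *; omega⟩)
      (P := fun p ↦ (p.2.1 - p.2.2) % 4 = 0)
      (by rintro p ⟨h, hz⟩; have := parity_of_mem_reps113 h hm4; dsimp only; omega),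
    (InvOn.bijOn (f := fun p ↦ (p.1, (p.2.1 + 3 * p.2.2) / 2, (p.2.1 - p.2.2) / 2))
      (f' := fun p ↦ (p.1, (p.2.1 + 3 * p.2.2) / 2, (p.2.1 - p.2.2) / 2)) ⟨?_, ?_⟩ ?_ ?_).ncard_eq]
  · rintro ⟨x, y, z⟩ ⟨⟨-, hz⟩, hyz⟩
    dsimp only at hz hyz ⊢
    simp only [Prod.mk.injEq, true_and]
    omega
  · rintro ⟨x, y, z⟩ ⟨⟨h, hz⟩, hx⟩
    have := parity_of_mem_reps113 h hm4
    have := sub_emod_four_of_mem_reps113 h hm (by dsimp only at *; omega) hz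
    dsimp only at *
    simp only [Prod.mk.injEq, true_and]
    omega
  · rintro ⟨x, y, z⟩ ⟨⟨h, hz⟩, hyz⟩
    have := parity_of_mem_reps113 h hm4
    simp only [mem_ofPred_eq, mem_reps113] at *
    refine ⟨⟨?_, by omega⟩, by omega⟩
    have := sq_add_three_mul_sq_eq_of_reflection (y := y) (z := z) (Y := (y + 3 * z) / 2)
      (Z := (y - z) / 2) (by omega) (by omega)
    linarith
  · rintro ⟨x, y, z⟩ ⟨⟨h, hz⟩, hx⟩
    have := parity_of_mem_reps113 h hm4
    have := sub_emod_four_of_mem_reps113 h hm (by dsimp only at *; omega) hz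
    simp only [mem_ofPred_eq, mem_reps113] at *
    refine ⟨⟨?_, by omega⟩, by omega⟩
    have := sq_add_three_mul_sq_eq_of_reflection (y := y) (z := z) (Y := (y + 3 * z) / 2)
      (Z := (y - z) / 2) (by omega) (by omega)
    linarith

theorem stmt11_general (n : ℕ) :
    (n % 8 = 0 → t 1 1 6 n = 2 * N 1 1 3 (n + 1)) ∧
    (n % 8 = 4 → t 1 1 6 n = N 1 1 3 (n + 1)) := by
  have ht : t 1 1 6 n = 4 * {p ∈ reps113 (n + 1) | (p.1 + p.2.2) % 2 = 1}.ncard := by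
    rw [t_one_one_six_eq_ncard, ncard_reps113_four_mul]
  have hN : N 1 1 3 (n + 1) = (reps113 (n + 1)).ncard := by
    rw [N_one_one_three_eq_ncard, Nat.cast_succ]
  refine ⟨fun hn8 ↦ ?_, fun hn8 ↦ ?_⟩
  · have hm : ((n : ℤ) + 1) % 8 = 1 := by omega
    rw [hN, ← reps113_sep_even_eq_self hm, ncard_reps113_sep_even (by omega), ht,
      reps113_sep_add_odd_eq (by omega)]
    ring
  · have hm : ((n : ℤ) + 1) % 8 = 5 := by omega
    have hsplit := ncard_sep_add_ncard_sep_not (reps113 (n + 1)) fun p ↦ p.2.2 % 2 = 0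
    simp only [Int.emod_two_ne_zero] at hsplit
    rw [hN, ← hsplit, ncard_reps113_sep_even (by omega), ncard_reps113_sep_odd hm, ht,
      reps113_sep_add_odd_eq (by omega)]
    ring

theorem stmt11 (n : ℕ) (hn : 0 < n) :
    (n % 8 = 0 → t 1 1 6 n = 2 * N 1 1 3 (n + 1)) ∧
    (n % 8 = 4 → t 1 1 6 n = N 1 1 3 (n + 1)) :=
  stmt11_general n
end

section
/- For every positive integer n with n ≡ 3 or 5 (mod 8), 3·t(1,3,4;n) = 4·N(1,3,4;2n+2). -/
/-!
Write `n = 2K - 1`; then `K ≡ 2, 3 (mod 4)`. Completing squares (`8 · tri x + 1 = (2x + 1)²`)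
identifies `t(1,3,4;n)` with the number of odd solutions of `x² + 3y² + 4z² = 16K`, while
`N(1,3,4;2n+2)` counts all solutions of `x² + 3y² + 4z² = 4K`.

Multiplication by `1 - √-3`, followed or not by conjugation, multiplies `x² + 3y²` by `4`; the
two maps together send two copies of `{(x, y) | x + y odd}` bijectively onto the pairs of odd
integers. Applied twice (with a parity argument mod 4 at each step), this shows that the first
count is `4r`, where `r` is the number of solutions of `x² + 3y² + z² = K` with `x + y` odd. In
the second count the solutions with `x, y` odd contribute `2r` in the same way, and those with
`x, y` even are the doubles of the solutions of `x² + 3y² + z² = K`, which all have `x + y` odd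
because `K ≡ 2, 3 (mod 4)`; so it is `3r`.
-/

lemma sq_emod_four_eq_emod_two (x : ℤ) : x ^ 2 % 4 = x % 2 := by
  rcases Int.even_or_odd' x with ⟨k, rfl | rfl⟩ <;> ring_nf <;> omega

lemma four_dvd_sq_add_three_sq_iff {x y : ℤ} : 4 ∣ x ^ 2 + 3 * y ^ 2 ↔ x % 2 = y % 2 := by
  have := sq_emod_four_eq_emod_two x
  have := sq_emod_four_eq_emod_two y
  rcases Int.emod_two_eq_zero_or_one x with hx | hx <;>
    rcases Int.emod_two_eq_zero_or_one y with hy | hy <;> omega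

lemma even_and_odd_of_sq_add_three_sq_add_sq {x y z K : ℤ}
    (h : x ^ 2 + 3 * y ^ 2 + z ^ 2 = 4 * K) (hz : Odd z) : Even x ∧ Odd y := by
  have := sq_emod_four_eq_emod_two x
  have := sq_emod_four_eq_emod_two y
  have := sq_emod_four_eq_emod_two z
  rw [Int.odd_iff] at hz
  rw [Int.even_iff, Int.odd_iff]
  rcases Int.emod_two_eq_zero_or_one x with hx | hx <;>
    rcases Int.emod_two_eq_zero_or_one y with hy | hy <;> omega

lemma odd_add_of_sq_add_three_sq_add_sq {x y z K : ℤ} (hK : K % 4 = 2 ∨ K % 4 = 3)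
    (h : x ^ 2 + 3 * y ^ 2 + z ^ 2 = K) : Odd (x + y) := by
  have := sq_emod_four_eq_emod_two x
  have := sq_emod_four_eq_emod_two y
  have := sq_emod_four_eq_emod_two z
  rw [Int.odd_iff]
  rcases Int.emod_two_eq_zero_or_one x with hx | hx <;>
    rcases Int.emod_two_eq_zero_or_one y with hy | hy <;> omega

lemma eight_mul_tri_add_one (x : ℤ) : 8 * tri x + 1 = (2 * x + 1) ^ 2 := by
  have h : 2 * tri x = x * (x + 1) := Int.mul_ediv_cancel' (Int.even_mul_succ_self x).two_dvd
  linear_combination 4 * h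

lemma t_eq_card_odd (a b c n : ℕ) :
    t a b c n = Nat.card {p : ℤ × ℤ × ℤ // (Odd p.1 ∧ Odd p.2.1 ∧ Odd p.2.2) ∧
      a * p.1 ^ 2 + b * p.2.1 ^ 2 + c * p.2.2 ^ 2 = 8 * n + a + b + c} := by
  refine Nat.card_congr (Equiv.ofBijective
    (fun p => ⟨(2 * p.1.1 + 1, 2 * p.1.2.1 + 1, 2 * p.1.2.2 + 1), ?_⟩) ⟨?_, ?_⟩)
  · obtain ⟨⟨x, y, z⟩, hp⟩ := p
    refine ⟨⟨odd_two_mul_add_one x, odd_two_mul_add_one y, odd_two_mul_add_one z⟩, ?_⟩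
    simp only [← eight_mul_tri_add_one]
    linear_combination -8 * hp
  · rintro ⟨⟨x, y, z⟩, _⟩ ⟨⟨x', y', z'⟩, _⟩ h
    simp only [Subtype.mk.injEq, Prod.mk.injEq] at h ⊢
    omega
  · rintro ⟨⟨_, _, _⟩, ⟨⟨x, hx⟩, ⟨y, hy⟩, ⟨z, hz⟩⟩, hp⟩
    dsimp only at hx hy hz hp
    subst hx hy hz
    refine ⟨⟨(x, y, z), ?_⟩, rfl⟩
    simp only [← eight_mul_tri_add_one] at hp
    linarith

section Twist

variable {α : Type*}

def sqAddThreeSq (p : ℤ × ℤ × α) : ℤ := p.1 ^ 2 + 3 * p.2.1 ^ 2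

/-- On the first two coordinates, `x + y√-3 ↦ (x + y√-3)(1 - √-3)`, conjugated for `false`. -/
def twist : Bool → ℤ × ℤ × α → ℤ × ℤ × α
  | true, (x, y, z) => (x + 3 * y, y - x, z)
  | false, (x, y, z) => (x + 3 * y, x - y, z)

lemma sqAddThreeSq_twist (s : Bool) (p : ℤ × ℤ × α) :
    sqAddThreeSq (twist s p) = 4 * sqAddThreeSq p := by
  obtain ⟨x, y, z⟩ := p
  cases s <;> simp only [twist, sqAddThreeSq] <;> ring

lemma twist_snd_snd (s : Bool) (p : ℤ × ℤ × α) : (twist s p).2.2 = p.2.2 := by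
  cases s <;> rfl

lemma odd_twist_fst_iff (s : Bool) (p : ℤ × ℤ × α) :
    Odd (twist s p).1 ↔ Odd (p.1 + p.2.1) := by
  obtain ⟨x, y, z⟩ := p
  cases s <;> simp only [twist, Int.odd_iff] <;> omega

lemma odd_twist_snd_fst_iff (s : Bool) (p : ℤ × ℤ × α) :
    Odd (twist s p).2.1 ↔ Odd (p.1 + p.2.1) := by
  obtain ⟨x, y, z⟩ := p
  cases s <;> simp only [twist, Int.odd_iff] <;> omega

lemma twist_inj {s s' : Bool} {p p' : ℤ × ℤ × α} (hp : Odd (p.1 + p.2.1))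
    (h : twist s p = twist s' p') : s = s' ∧ p = p' := by
  obtain ⟨x, y, z⟩ := p
  obtain ⟨x', y', z'⟩ := p'
  rw [Int.odd_iff] at hp
  dsimp only at hp
  cases s <;> cases s' <;> simp only [twist, Prod.mk.injEq] at h <;> obtain ⟨h₁, h₂, rfl⟩ := h
  -- in the mixed cases `h₁` and `h₂` force `x + y` to be even
  all_goals first | (exfalso; omega) | exact ⟨rfl, by simp only [Prod.mk.injEq, and_true]; omega⟩

lemma exists_twist_eq {w : ℤ × ℤ × α} (hw : Odd w.1 ∧ Odd w.2.1) : ∃ s p, twist s p = w := by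
  obtain ⟨x, y, z⟩ := w
  obtain ⟨hx, hy⟩ : x % 2 = 1 ∧ y % 2 = 1 := by simpa only [Int.odd_iff] using hw
  by_cases h : 4 ∣ x + y
  · obtain ⟨k, hk⟩ := h
    exact ⟨true, (x - 3 * k, k, z), by simp only [twist, Prod.mk.injEq, and_true]; omega⟩
  · obtain ⟨k, hk⟩ : 4 ∣ x - y := by omega
    exact ⟨false, (x - 3 * k, k, z), by simp only [twist, Prod.mk.injEq, and_true]; omega⟩


noncomputable def twistEquiv (S : ℤ → α → Prop) :
    Bool × {p : ℤ × ℤ × α // Odd (p.1 + p.2.1) ∧ S (4 * sqAddThreeSq p) p.2.2} ≃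
      {p : ℤ × ℤ × α // (Odd p.1 ∧ Odd p.2.1) ∧ S (sqAddThreeSq p) p.2.2} :=
  Equiv.ofBijective
    (fun x => ⟨twist x.1 x.2, ⟨(odd_twist_fst_iff _ _).2 x.2.2.1,
      (odd_twist_snd_fst_iff _ _).2 x.2.2.1⟩, by
        rw [sqAddThreeSq_twist, twist_snd_snd]; exact x.2.2.2⟩)
    ⟨by
      rintro ⟨s, p, hp, _⟩ ⟨s', p', _⟩ h
      obtain ⟨rfl, rfl⟩ := twist_inj hp (congrArg Subtype.val h)
      rfl,
     by
      rintro ⟨w, hw, hS⟩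
      obtain ⟨s, p, rfl⟩ := exists_twist_eq hw
      refine ⟨(s, ⟨p, (odd_twist_fst_iff s p).1 hw.1, ?_⟩), rfl⟩
      rwa [sqAddThreeSq_twist, twist_snd_snd] at hS⟩

lemma card_odd_odd (S : ℤ → α → Prop) :
    Nat.card {p : ℤ × ℤ × α // (Odd p.1 ∧ Odd p.2.1) ∧ S (sqAddThreeSq p) p.2.2} =
      2 * Nat.card {p : ℤ × ℤ × α // Odd (p.1 + p.2.1) ∧ S (4 * sqAddThreeSq p) p.2.2} := by
  rw [← Nat.card_congr (twistEquiv S), Nat.card_prod, Nat.card_eq_fintype_card (α := Bool),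
    Fintype.card_bool]

end Twist

lemma card_odd_sq_add_three_sq_add_four_sq (K : ℤ) :
    Nat.card {p : ℤ × ℤ × ℤ // (Odd p.1 ∧ Odd p.2.1 ∧ Odd p.2.2) ∧
      p.1 ^ 2 + 3 * p.2.1 ^ 2 + 4 * p.2.2 ^ 2 = 16 * K} =
    2 * Nat.card {p : ℤ × ℤ × ℤ // p.1 ^ 2 + 3 * p.2.1 ^ 2 + p.2.2 ^ 2 = 4 * K ∧ Odd p.2.2} := by
  calc _ = Nat.card {p : ℤ × ℤ × ℤ // (Odd p.1 ∧ Odd p.2.1) ∧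
        (sqAddThreeSq p + 4 * p.2.2 ^ 2 = 16 * K ∧ Odd p.2.2)} :=
        Nat.card_congr (Equiv.subtypeEquivRight fun p => by unfold sqAddThreeSq; tauto)
    _ = 2 * Nat.card {p : ℤ × ℤ × ℤ // Odd (p.1 + p.2.1) ∧
        (4 * sqAddThreeSq p + 4 * p.2.2 ^ 2 = 16 * K ∧ Odd p.2.2)} :=
        card_odd_odd fun c z => c + 4 * z ^ 2 = 16 * K ∧ Odd z
    _ = _ := by
      congr 1
      refine Nat.card_congr (Equiv.subtypeEquivRight fun p => ?_)
      unfold sqAddThreeSq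
      constructor
      · rintro ⟨-, h, hz⟩
        exact ⟨by linarith, hz⟩
      · rintro ⟨h, hz⟩
        obtain ⟨hx, hy⟩ := even_and_odd_of_sq_add_three_sq_add_sq h hz
        exact ⟨hx.add_odd hy, by linarith, hz⟩

lemma card_sq_add_three_sq_add_odd_sq (K : ℤ) :
    Nat.card {p : ℤ × ℤ × ℤ // p.1 ^ 2 + 3 * p.2.1 ^ 2 + p.2.2 ^ 2 = 4 * K ∧ Odd p.2.2} =
    2 * Nat.card {p : ℤ × ℤ × ℤ //
      p.1 ^ 2 + 3 * p.2.1 ^ 2 + p.2.2 ^ 2 = K ∧ Odd (p.1 + p.2.1)} := by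
  calc _ = Nat.card {p : ℤ × ℤ × ℤ // (Odd p.1 ∧ Odd p.2.1) ∧
        sqAddThreeSq p + p.2.2 ^ 2 = 4 * K} := by
        let swap : ℤ × ℤ × ℤ ≃ ℤ × ℤ × ℤ :=
          ⟨fun p => (p.2.2, p.2.1, p.1), fun p => (p.2.2, p.2.1, p.1), fun _ => rfl, fun _ => rfl⟩
        refine Nat.card_congr (Equiv.subtypeEquiv swap fun ⟨x, y, z⟩ => ?_)
        simp only [swap, Equiv.coe_fn_mk, sqAddThreeSq]
        constructor
        · rintro ⟨h, hz⟩
          exact ⟨⟨hz, (even_and_odd_of_sq_add_three_sq_add_sq h hz).2⟩, by linarith⟩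
        · rintro ⟨⟨hz, -⟩, h⟩
          exact ⟨by linarith, hz⟩
    _ = 2 * Nat.card {p : ℤ × ℤ × ℤ // Odd (p.1 + p.2.1) ∧
        4 * sqAddThreeSq p + p.2.2 ^ 2 = 4 * K} :=
        card_odd_odd fun c z => c + z ^ 2 = 4 * K
    _ = _ := by
      congr 1
      refine (Nat.card_congr (Equiv.ofBijective
        (fun p => ⟨(p.1.1, p.1.2.1, 2 * p.1.2.2), p.2.2, by
          unfold sqAddThreeSq; linear_combination 4 * p.2.1⟩) ⟨?_, ?_⟩)).symm
      · rintro ⟨⟨x, y, z⟩, _⟩ ⟨⟨x', y', z'⟩, _⟩ h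
        simp only [Subtype.mk.injEq, Prod.mk.injEq] at h ⊢
        omega
      · rintro ⟨⟨x, y, z⟩, hxy, h⟩
        unfold sqAddThreeSq at h
        dsimp only at hxy h
        obtain ⟨w, rfl⟩ : Even z := by
          have := sq_emod_four_eq_emod_two z
          rw [Int.even_iff]
          omega
        exact ⟨⟨(x, y, w), by linarith, hxy⟩, by simp only [two_mul]⟩

lemma Nat.card_bool_prod_sum_self (X : Type*) : Nat.card (Bool × X ⊕ X) = 3 * Nat.card X := by
  rw [Nat.card_congr ((Equiv.sumCongr (Equiv.refl _) (Equiv.punitProd.{0} X).symm).trans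
    (Equiv.sumProdDistrib Bool Unit X).symm), Nat.card_prod]
  simp

noncomputable def doubleEquiv (K : ℤ) :
    {p : ℤ × ℤ × ℤ // p.1 ^ 2 + 3 * p.2.1 ^ 2 + p.2.2 ^ 2 = K} ≃
      {p : ℤ × ℤ × ℤ // p.1 ^ 2 + 3 * p.2.1 ^ 2 + 4 * p.2.2 ^ 2 = 4 * K ∧ ¬Odd p.1} :=
  Equiv.ofBijective
    (fun p => ⟨(2 * p.1.1, 2 * p.1.2.1, p.1.2.2), by linear_combination 4 * p.2,
      by simp only [Int.not_odd_iff_even, even_two_mul]⟩)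
    ⟨by
      rintro ⟨⟨x, y, z⟩, _⟩ ⟨⟨x', y', z'⟩, _⟩ h
      simp only [Subtype.mk.injEq, Prod.mk.injEq] at h ⊢
      omega,
     by
      rintro ⟨⟨x, y, z⟩, h, hx⟩
      dsimp only at h hx
      rw [Int.not_odd_iff_even, Int.even_iff] at hx
      have hxy : x % 2 = y % 2 :=
        four_dvd_sq_add_three_sq_iff.1 ⟨K - z ^ 2, by linear_combination h⟩
      obtain ⟨a, rfl⟩ : 2 ∣ x := by omega
      obtain ⟨b, rfl⟩ : 2 ∣ y := by omega
      exact ⟨⟨(a, b, z), by linarith⟩, rfl⟩⟩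

noncomputable def oddPartEquiv (K : ℤ) :
    {p : ℤ × ℤ × ℤ // p.1 ^ 2 + 3 * p.2.1 ^ 2 + 4 * p.2.2 ^ 2 = 4 * K ∧ Odd p.1} ≃
      Bool × {p : ℤ × ℤ × ℤ // p.1 ^ 2 + 3 * p.2.1 ^ 2 + p.2.2 ^ 2 = K ∧ Odd (p.1 + p.2.1)} :=
  (Equiv.subtypeEquivRight fun p => by
    unfold sqAddThreeSq
    refine ⟨fun ⟨h, hx⟩ => ⟨⟨hx, ?_⟩, h⟩, fun ⟨⟨hx, _⟩, h⟩ => ⟨h, hx⟩⟩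
    have hxy : p.1 % 2 = p.2.1 % 2 :=
      four_dvd_sq_add_three_sq_iff.1 ⟨K - p.2.2 ^ 2, by linear_combination h⟩
    rw [Int.odd_iff] at hx ⊢
    omega).trans <|
  (twistEquiv fun c z => c + 4 * z ^ 2 = 4 * K).symm.trans <|
  Equiv.prodCongr (Equiv.refl _) (Equiv.subtypeEquivRight fun p => by
    unfold sqAddThreeSq
    exact ⟨fun ⟨hxy, h⟩ => ⟨by linarith, hxy⟩, fun ⟨h, hxy⟩ => ⟨hxy, by linarith⟩⟩)

lemma card_sq_add_three_sq_add_four_sq {K : ℤ} (hK : K % 4 = 2 ∨ K % 4 = 3) :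
    Nat.card {p : ℤ × ℤ × ℤ // p.1 ^ 2 + 3 * p.2.1 ^ 2 + 4 * p.2.2 ^ 2 = 4 * K} =
    3 * Nat.card {p : ℤ × ℤ × ℤ //
      p.1 ^ 2 + 3 * p.2.1 ^ 2 + p.2.2 ^ 2 = K ∧ Odd (p.1 + p.2.1)} := by
  have odd_sum : ∀ p : ℤ × ℤ × ℤ, p.1 ^ 2 + 3 * p.2.1 ^ 2 + p.2.2 ^ 2 = K ↔
      p.1 ^ 2 + 3 * p.2.1 ^ 2 + p.2.2 ^ 2 = K ∧ Odd (p.1 + p.2.1) := fun p =>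
    ⟨fun h => ⟨h, odd_add_of_sq_add_three_sq_add_sq hK h⟩, And.left⟩
  let B := {p : ℤ × ℤ × ℤ // p.1 ^ 2 + 3 * p.2.1 ^ 2 + 4 * p.2.2 ^ 2 = 4 * K}
  calc Nat.card B = Nat.card ({b : B // Odd b.1.1} ⊕ {b : B // ¬Odd b.1.1}) :=
        (Nat.card_congr (Equiv.sumCompl _)).symm
    _ = _ := Nat.card_congr <| Equiv.sumCongr
        ((Equiv.subtypeSubtypeEquivSubtypeInter _ (fun p : ℤ × ℤ × ℤ => Odd p.1)).trans
          (oddPartEquiv K))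
        ((Equiv.subtypeSubtypeEquivSubtypeInter _ (fun p : ℤ × ℤ × ℤ => ¬Odd p.1)).trans
          ((doubleEquiv K).symm.trans (Equiv.subtypeEquivRight odd_sum)))
    _ = _ := Nat.card_bool_prod_sum_self _

theorem stmt16_general (n : ℕ) (h : n % 8 = 3 ∨ n % 8 = 5) :
    3 * t 1 3 4 n = 4 * N 1 3 4 (2 * n + 2) := by
  obtain ⟨K, hK⟩ : ∃ K : ℤ, (n : ℤ) + 1 = 2 * K := ⟨((n + 1) / 2 : ℕ), by omega⟩
  have hK4 : K % 4 = 2 ∨ K % 4 = 3 := by omega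
  have ht : t 1 3 4 n = Nat.card {p : ℤ × ℤ × ℤ // (Odd p.1 ∧ Odd p.2.1 ∧ Odd p.2.2) ∧
      p.1 ^ 2 + 3 * p.2.1 ^ 2 + 4 * p.2.2 ^ 2 = 16 * K} := by
    rw [t_eq_card_odd]
    exact Nat.card_congr (Equiv.subtypeEquivRight fun p => by
      push_cast
      constructor <;> rintro ⟨hodd, hp⟩ <;> exact ⟨hodd, by linarith⟩)
  have hN : N 1 3 4 (2 * n + 2) =
      Nat.card {p : ℤ × ℤ × ℤ // p.1 ^ 2 + 3 * p.2.1 ^ 2 + 4 * p.2.2 ^ 2 = 4 * K} :=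
    Nat.card_congr (Equiv.subtypeEquivRight fun p => by
      push_cast
      constructor <;> intro hp <;> linarith)
  rw [ht, hN, card_odd_sq_add_three_sq_add_four_sq, card_sq_add_three_sq_add_odd_sq,
    card_sq_add_three_sq_add_four_sq hK4]
  ring

theorem stmt16 (n : ℕ) (hn : 0 < n) (h : n % 8 = 3 ∨ n % 8 = 5) :
    3 * t 1 3 4 n = 4 * N 1 3 4 (2 * n + 2) :=
  stmt16_general n h
end
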